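/- Let ω be a fixed angle with 0 < ω < π. Let b = (b₁, 0) and c = (c₁, 0) with b₁ < c₁. If q' = (x, y) is any point with y > 0 and ∠(b, q', c) = ω, then y ≤ ((c₁ − b₁)/2)·cot(ω/2); that is, among all points on one side of the line bc at which the segment bc subtends the angle ω, the apex of the isosceles triangle, which lies at height ((c₁ − b₁)/2)·cot(ω/2), has maximal distance to the line through b and c. -/

import Mathlib

open Real EuclideanGeometry

/-- The point of the Euclidean plane with coordinates `x` and `y`. -/
def pt (x y : ℝ) : EuclideanSpace ℝ (Fin 2) := WithLp.toLp 2 ![x, y]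

/-!
Write `N = dist b q' * dist c q'` and `q' = (x, y)`. Then `N cos ω = (b₁ - x)(c₁ - x) + y²` is the
inner product of `b - q'` and `c - q'`, and `N sin ω = (c₁ - b₁) y` is twice the area of the
triangle. Since `cot (ω / 2) = (1 + cos ω) / sin ω`, the claim becomes
`y² - (b₁ - x)(c₁ - x) ≤ N`, which is Cauchy–Schwarz for `(x - b₁, y)` and `(c₁ - x, y)`,
vectors with the same lengths as `b - q'` and `c - q'`.
-/

-- No hypothesis on `θ`: where `sin θ = 0` both sides vanish, by the convention `x / 0 = 0`.
theorem Real.cot_half_eq (θ : ℝ) : cot (θ / 2) = (1 + cos θ) / sin θ := by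
  have hsin : sin θ = 2 * sin (θ / 2) * cos (θ / 2) := by
    rw [← sin_two_mul]; ring_nf
  have hcos : 1 + cos θ = 2 * cos (θ / 2) ^ 2 := by
    rw [cos_sq]; ring_nf
  rw [cot_eq_cos_div_sin, hsin, hcos]
  rcases eq_or_ne (cos (θ / 2)) 0 with h | h
  · simp [h]
  · field_simp

theorem pt_vsub_pt (a b c d : ℝ) : pt a b -ᵥ pt c d = pt (a - c) (b - d) := by
  ext i; fin_cases i <;> simp [pt]

theorem inner_pt_pt (a b c d : ℝ) : inner ℝ (pt a b) (pt c d) = a * c + b * d := by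
  simp [pt, PiLp.inner_apply, Fin.sum_univ_two]; ring

theorem norm_pt (a b : ℝ) : ‖pt a b‖ = √(a ^ 2 + b ^ 2) := by
  rw [norm_eq_sqrt_real_inner, inner_pt_pt]; ring_nf

theorem cos_angle_pt_mul_norm_mul_norm (a b c d : ℝ) :
    cos (InnerProductGeometry.angle (pt a b) (pt c d)) * (‖pt a b‖ * ‖pt c d‖) =
      a * c + b * d := by
  rw [InnerProductGeometry.cos_angle_mul_norm_mul_norm, inner_pt_pt]

theorem sin_angle_pt_mul_norm_mul_norm (a b c d : ℝ) :
    sin (InnerProductGeometry.angle (pt a b) (pt c d)) * (‖pt a b‖ * ‖pt c d‖) =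
      |a * d - b * c| := by
  rw [InnerProductGeometry.sin_angle_mul_norm_mul_norm, inner_pt_pt, inner_pt_pt, inner_pt_pt,
    ← sqrt_sq_eq_abs]
  ring_nf

theorem isosceles_apex_has_maximal_height_general
    (ω b₁ c₁ x y : ℝ) (hbc : b₁ < c₁)
    (hy : 0 < y)
    (hang : EuclideanGeometry.angle (pt b₁ 0) (pt x y) (pt c₁ 0) = ω) :
    y ≤ ((c₁ - b₁) / 2) * Real.cot (ω / 2) := by
  rw [EuclideanGeometry.angle, pt_vsub_pt, pt_vsub_pt, zero_sub] at hang
  set A := b₁ - x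
  set C := c₁ - x
  set N := ‖pt A (-y)‖ * ‖pt C (-y)‖
  have hcos : cos ω * N = A * C + y ^ 2 := by
    rw [← hang, cos_angle_pt_mul_norm_mul_norm]; ring
  have hsin : sin ω * N = (c₁ - b₁) * y := by
    rw [← hang, sin_angle_pt_mul_norm_mul_norm, abs_of_pos] <;> nlinarith
  have hN : 0 < N := by simp only [N, norm_pt, neg_sq]; positivity
  have key : y ^ 2 - A * C ≤ N := by
    have := real_inner_le_norm (pt (-A) y) (pt C y)
    simp only [inner_pt_pt, norm_pt, neg_sq] at this
    simp only [N, norm_pt, neg_sq]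
    linarith
  have hsin_pos : 0 < sin ω := pos_of_mul_pos_left (hsin ▸ by positivity) hN.le
  rw [Real.cot_half_eq, ← mul_div_assoc, le_div_iff₀ hsin_pos]
  refine le_of_mul_le_mul_right ?_ hN
  calc y * sin ω * N = (c₁ - b₁) * y ^ 2 := by rw [mul_assoc, hsin]; ring
    _ ≤ (c₁ - b₁) / 2 * (N + (A * C + y ^ 2)) := by nlinarith
    _ = (c₁ - b₁) / 2 * (1 + cos ω) * N := by rw [← hcos]; ring

theorem isosceles_apex_has_maximal_height
    (ω b₁ c₁ x y : ℝ) (hω₀ : 0 < ω) (hω₁ : ω < π) (hbc : b₁ < c₁)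
    (hy : 0 < y)
    (hang : EuclideanGeometry.angle (pt b₁ 0) (pt x y) (pt c₁ 0) = ω) :
    y ≤ ((c₁ - b₁) / 2) * Real.cot (ω / 2) :=
  isosceles_apex_has_maximal_height_general ω b₁ c₁ x y hbc hy hang
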